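/- With the same notation, the leading-order defaultable put price satisfies Put₀ = -x + x N(d₁) - K B₁ N(d₂) + K B₀, where B₁ = B₀^c(t,r;z,T,1) is the discount factor including the default intensity (l = 1), B₀ = B₀^c(t,r;z,T,0) is the default-free discount factor, and d_{1,2} = (log(x/(K B₁)) ± v/2)/√v; equivalently, put-call parity holds in the defaultable model: Put₀ - C₀ = -x + K B₀ for the payoffs in the jump-to-default framework. -/

import Mathlib

/-!
The log-price `u` is Gaussian with mean `m` and variance `v`, and the put payoff `(K - eᵘ)⁺`
lives on `{u ≤ log K}`. There the `K`-part has Gaussian mass `N(-d₂)`, while completing the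
square turns `eᵘ` times the density into `e^{m + v/2}` times the density with mean `m + v`,
whose mass is `N(-d₁)`; with `e^{m + v/2} = x / B₁` and `N(-d) = 1 - N(d)` this is the formula,
and parity is its difference with `C₀`.
-/

open Real MeasureTheory

/-- Standard normal cumulative distribution function. -/
noncomputable def stdNormalCDF (d : ℝ) : ℝ :=
  ∫ s in Set.Iic d, (Real.sqrt (2 * Real.pi))⁻¹ * Real.exp (-s ^ 2 / 2)

open ProbabilityTheory NNReal Set

lemma setIntegral_gaussianPDFReal (m : ℝ) {v : ℝ≥0} (hv : v ≠ 0) (s : Set ℝ) :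
    ∫ u in s, gaussianPDFReal m v u = (gaussianReal m v).real s := by
  rw [measureReal_def, gaussianReal_apply_eq_integral m hv,
    ENNReal.toReal_ofReal (integral_nonneg (gaussianPDFReal_nonneg m v))]

lemma stdNormalCDF_eq_gaussianReal (d : ℝ) :
    stdNormalCDF d = (gaussianReal 0 1).real (Iic d) := by
  rw [← setIntegral_gaussianPDFReal 0 one_ne_zero, stdNormalCDF]
  simp [gaussianPDFReal]

lemma gaussianReal_map_standardize (m : ℝ) {v : ℝ≥0} (hv : v ≠ 0) :
    ((gaussianReal m v).map (· - m)).map (· / √v) = gaussianReal 0 1 := by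
  rw [gaussianReal_map_sub_const, gaussianReal_map_div_const, sub_self, zero_div]
  congr
  ext
  simp [hv]

lemma gaussianReal_real_Iic (m : ℝ) {v : ℝ≥0} (hv : v ≠ 0) (a : ℝ) :
    (gaussianReal m v).real (Iic a) = stdNormalCDF ((a - m) / √v) := by
  have hs : 0 < √(v : ℝ) := by positivity
  rw [stdNormalCDF_eq_gaussianReal, ← gaussianReal_map_standardize m hv,
    map_measureReal_apply (by fun_prop) measurableSet_Iic,
    map_measureReal_apply (by fun_prop) (measurableSet_Iic.preimage (by fun_prop))]
  congr 1
  ext u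
  simp only [mem_Iic, mem_preimage, div_le_div_iff_of_pos_right hs, sub_le_sub_iff_right]

lemma stdNormalCDF_neg (d : ℝ) : stdNormalCDF (-d) = 1 - stdNormalCDF d := by
  have := nullSingletonClass_gaussianReal (μ := 0) one_ne_zero
  have hsymm : (gaussianReal 0 1).map (fun x ↦ -x) = gaussianReal 0 1 := by
    simpa using gaussianReal_map_neg (μ := 0) (v := 1)
  calc stdNormalCDF (-d) = ((gaussianReal 0 1).map (fun x ↦ -x)).real (Iic (-d)) := by
        rw [hsymm, stdNormalCDF_eq_gaussianReal]
    _ = (gaussianReal 0 1).real (Iio d)ᶜ := by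
        rw [map_measureReal_apply (by fun_prop) measurableSet_Iic, compl_Iio]
        congr 1
        ext u
        simp
    _ = 1 - stdNormalCDF d := by
        rw [probReal_compl_eq_one_sub measurableSet_Iio, measureReal_congr Iio_ae_eq_Iic,
          stdNormalCDF_eq_gaussianReal]

lemma exp_mul_gaussianPDFReal (m : ℝ) (v : ℝ≥0) (u : ℝ) :
    exp u * gaussianPDFReal m v u = exp (m + v / 2) * gaussianPDFReal (m + v) v u := by
  rcases eq_or_ne v 0 with rfl | hv
  · simp
  have hv' : (v : ℝ) ≠ 0 := by exact_mod_cast hv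
  simp only [gaussianPDFReal]
  rw [mul_left_comm, mul_left_comm (exp _), ← exp_add, ← exp_add]
  congr 2
  field_simp
  ring

lemma max_sub_exp_eq_indicator {K : ℝ} (hK : 0 < K) (u : ℝ) :
    max (K - exp u) 0 = (Iic (log K)).indicator (fun u ↦ K - exp u) u := by
  by_cases h : u ≤ log K
  · rw [indicator_of_mem (mem_Iic.2 h), max_eq_left]
    rwa [sub_nonneg, ← le_log_iff_exp_le hK]
  · rw [indicator_of_notMem (fun h' ↦ h (mem_Iic.1 h')), max_eq_right]
    rw [sub_nonpos, ← log_le_iff_le_exp hK]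
    exact (not_le.1 h).le

lemma integral_max_sub_exp_mul_gaussianPDFReal (m : ℝ) {v : ℝ≥0} (hv : v ≠ 0) {K : ℝ}
    (hK : 0 < K) :
    ∫ u, max (K - exp u) 0 * gaussianPDFReal m v u =
      K * stdNormalCDF ((log K - m) / √v) -
        exp (m + v / 2) * stdNormalCDF ((log K - (m + v)) / √v) := by
  have hφ := (integrable_gaussianPDFReal m v).integrableOn (s := Iic (log K))
  have hexpφ : IntegrableOn (fun u ↦ exp u * gaussianPDFReal m v u) (Iic (log K)) := by
    simp_rw [exp_mul_gaussianPDFReal m v]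
    exact ((integrable_gaussianPDFReal (m + v) v).const_mul _).integrableOn
  calc ∫ u, max (K - exp u) 0 * gaussianPDFReal m v u
      = ∫ u in Iic (log K), K * gaussianPDFReal m v u - exp u * gaussianPDFReal m v u := by
        simp_rw [max_sub_exp_eq_indicator hK, ← indicator_mul_const, sub_mul]
        exact integral_indicator measurableSet_Iic
    _ = K * (gaussianReal m v).real (Iic (log K)) -
          exp (m + v / 2) * (gaussianReal (m + v) v).real (Iic (log K)) := by
        rw [integral_sub (hφ.const_mul K) hexpφ, integral_const_mul]
        simp_rw [exp_mul_gaussianPDFReal m v]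
        rw [integral_const_mul, setIntegral_gaussianPDFReal _ hv, setIntegral_gaussianPDFReal _ hv]
    _ = _ := by rw [gaussianReal_real_Iic _ hv, gaussianReal_real_Iic _ hv]

theorem defaultable_put_formula_general (v B₀ B₁ x K lam T t : ℝ)
    (hv : 0 < v) (hB₀ : 0 < B₀)
    (hB₁ : B₁ = Real.exp (-lam * (T - t)) * B₀)
    (hx : 0 < x) (hK : 0 < K)
    (m d₁ d₂ Put₀ C₀ : ℝ)
    (hm : m = Real.log (x / B₁) - v / 2)
    (hd₁ : d₁ = (Real.log (x / (K * B₁)) + v / 2) / Real.sqrt v)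
    (hd₂ : d₂ = (Real.log (x / (K * B₁)) - v / 2) / Real.sqrt v)
    (hPut : Put₀ = (∫ u : ℝ, max (K - Real.exp u) 0 * B₁ *
        ((Real.sqrt (2 * Real.pi * v))⁻¹ * Real.exp (-(u - m) ^ 2 / (2 * v))))
        + K * B₀ - K * B₁)
    (hC : C₀ = x * stdNormalCDF d₁ - K * B₁ * stdNormalCDF d₂) :
    Put₀ = -x + x * stdNormalCDF d₁ - K * B₁ * stdNormalCDF d₂ + K * B₀ ∧
      Put₀ - C₀ = -x + K * B₀ := by
  have hB₁pos : 0 < B₁ := hB₁ ▸ mul_pos (exp_pos _) hB₀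
  set V : ℝ≥0 := v.toNNReal
  have hV : (V : ℝ) = v := coe_toNNReal v hv.le
  have hV₀ : V ≠ 0 := by positivity
  have hput : Put₀ =
      B₁ * (K * stdNormalCDF (-d₂) - x / B₁ * stdNormalCDF (-d₁)) + K * B₀ - K * B₁ := by
    have hlog : log (x / (K * B₁)) = log (x / B₁) - log K := by
      rw [mul_comm, ← div_div, log_div (by positivity) hK.ne']
    have hd₂' : (log K - m) / √V = -d₂ := by rw [hd₂, hm, hlog, hV]; ring
    have hd₁' : (log K - (m + V)) / √V = -d₁ := by rw [hd₁, hm, hlog, hV]; ring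
    have hexp : exp (m + V / 2) = x / B₁ := by
      rw [hV, hm, sub_add_cancel, exp_log (by positivity)]
    rw [hPut, ← hd₂', ← hd₁', ← hexp, ← integral_max_sub_exp_mul_gaussianPDFReal m hV₀ hK,
      ← integral_const_mul]
    congr 3 with u
    rw [gaussianPDFReal, hV]
    ring
  have hPut₀ : Put₀ = -x + x * stdNormalCDF d₁ - K * B₁ * stdNormalCDF d₂ + K * B₀ := by
    rw [hput, stdNormalCDF_neg, stdNormalCDF_neg]
    field_simp
    ring
  exact ⟨hPut₀, by rw [hPut₀, hC]; ring⟩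

/-- leading-order defaultable put price and put-call parity in
the jump-to-default framework.  `B₁ = e^{-λ̄(T-t)} B₀` is the defaultable
discount factor (`l = 1`), `B₀` the default-free one; the put payoff includes
the strike received when default occurs before maturity, so
`Put₀ = B₁ ∫ (K - e^u)⁺ φ_{m,v}(u) du + K (B₀ - B₁)`.  Then
`Put₀ = -x + x N(d₁) - K B₁ N(d₂) + K B₀`, and put-call parity
`Put₀ - C₀ = -x + K B₀` holds with `C₀ = x N(d₁) - K B₁ N(d₂)`. -/
theorem defaultable_put_formula (v B₀ B₁ x K lam T t : ℝ)
    (hv : 0 < v) (hB₀ : 0 < B₀) (hlam : 0 ≤ lam) (htT : t ≤ T)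
    (hB₁ : B₁ = Real.exp (-lam * (T - t)) * B₀)
    (hx : 0 < x) (hK : 0 < K)
    (m d₁ d₂ Put₀ C₀ : ℝ)
    (hm : m = Real.log (x / B₁) - v / 2)
    (hd₁ : d₁ = (Real.log (x / (K * B₁)) + v / 2) / Real.sqrt v)
    (hd₂ : d₂ = (Real.log (x / (K * B₁)) - v / 2) / Real.sqrt v)
    (hPut : Put₀ = (∫ u : ℝ, max (K - Real.exp u) 0 * B₁ *
        ((Real.sqrt (2 * Real.pi * v))⁻¹ * Real.exp (-(u - m) ^ 2 / (2 * v))))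
        + K * B₀ - K * B₁)
    (hC : C₀ = x * stdNormalCDF d₁ - K * B₁ * stdNormalCDF d₂) :
    Put₀ = -x + x * stdNormalCDF d₁ - K * B₁ * stdNormalCDF d₂ + K * B₀ ∧
      Put₀ - C₀ = -x + K * B₀ :=
  defaultable_put_formula_general v B₀ B₁ x K lam T t hv hB₀ hB₁ hx hK m d₁ d₂ Put₀ C₀ hm hd₁ hd₂
    hPut hC
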